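/- Quasi-Banach Young inequality on a lattice: let p₀, p₁, p₂ ∈ (0,∞] satisfy 1/p₀ ≤ 1/p₁ + 1/p₂ − max(1, 1/p₁, 1/p₂), and let ω₀(j₁+j₂) ≤ ω₁(j₁) ω₂(j₂) for all j₁, j₂ in a lattice Λ. Then for finitely supported a₁, a₂ on Λ, ‖a₁ * a₂‖_{ℓ^{p₀}_{(ω₀)}} ≤ ‖a₁‖_{ℓ^{p₁}_{(ω₁)}} ‖a₂‖_{ℓ^{p₂}_{(ω₂)}}, where (a₁*a₂)(j) = ∑_{k∈Λ} a₁(j−k) a₂(k). -/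

import Mathlib

open MeasureTheory
open scoped ENNReal

/-- Weighted `ℓ^p` quasi-norm on a countable index set, via `eLpNorm` with
counting measure. -/
noncomputable def lqNorm {ι : Type*} (a : ι → ℂ) (q : ℝ≥0∞) : ℝ≥0∞ :=
  letI : MeasurableSpace ι := ⊤
  eLpNorm a q Measure.count

/-!
Put `F = |ω₁ a₁|` and `H = |ω₂ a₂|`; the weight condition bounds `|ω₀ (a₁ * a₂)|` pointwise by the
convolution `F * H`. Let `uᵢ = 1/pᵢ`, `M = max(1, u₁, u₂)` and `s = u₁ + u₂ - M ≥ u₀`. With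
`a = F ^ p₁` and `b = H ^ p₂`, the inequality `∑ cᵢ ^ M ≤ (∑ cᵢ) ^ M` followed by a three-factor
Hölder inequality gives
  `(F * H)(j) ≤ ‖a‖₁ ^ (M - u₂) * ‖b‖₁ ^ (M - u₁) * (a * b)(j) ^ s`,
and since `s p₀ ≥ 1` the `ℓ^p₀` quasi-norm of `(a * b) ^ s` is at most `‖a * b‖₁ ^ s`, which is
`(‖a‖₁ ‖b‖₁) ^ s`. The exponents add up to `‖a‖₁ ^ u₁ * ‖b‖₁ ^ u₂ = ‖F‖_p₁ ‖H‖_p₂`.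
If `p₁ = ∞`, the condition forces `p₂ ≤ 1` and `p₀ = ∞`, and `‖F‖_∞ ‖H‖₁` is the bound.
-/

namespace ENNReal

variable {ι : Type*}

theorem tsum_rpow_le_rpow_tsum (c : ι → ℝ≥0∞) {e : ℝ} (he : 1 ≤ e) :
    ∑' i, c i ^ e ≤ (∑' i, c i) ^ e := by
  have split (x : ℝ≥0∞) : x ^ e = x * x ^ (e - 1) := by
    conv_lhs => rw [← add_sub_cancel 1 e]
    rw [rpow_add_of_nonneg _ _ zero_le_one (by linarith), rpow_one]
  calc ∑' i, c i ^ e = ∑' i, c i * c i ^ (e - 1) := by simp only [split]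
    _ ≤ ∑' i, c i * (∑' j, c j) ^ (e - 1) := by
      gcongr with i
      exact ENNReal.le_tsum i
    _ = (∑' i, c i) ^ e := by rw [ENNReal.tsum_mul_right, ← split]

theorem tsum_mul_mul_rpow_le (f g h : ι → ℝ≥0∞) {p q r : ℝ} (hp : 0 ≤ p) (hq : 0 ≤ q)
    (hr : 0 ≤ r) (hpqr : p + q + r = 1) :
    ∑' i, f i ^ p * g i ^ q * h i ^ r ≤
      (∑' i, f i) ^ p * (∑' i, g i) ^ q * (∑' i, h i) ^ r := by
  let _ : MeasurableSpace ι := ⊤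
  have := lintegral_prod_norm_pow_le (μ := Measure.count) Finset.univ (f := ![f, g, h])
    (p := ![p, q, r]) (fun _ _ => Measurable.of_discrete.aemeasurable)
    (by simp [Fin.sum_univ_three, hpqr]) (by intro i; fin_cases i <;> simp [hp, hq, hr])
  simpa [Fin.prod_univ_three, lintegral_count, mul_assoc] using this

end ENNReal

noncomputable def discreteConv {G : Type*} [AddGroup G] (F H : G → ℝ≥0∞) (j : G) : ℝ≥0∞ :=
  ∑' k, F (j - k) * H k

section Convolution

variable {G : Type*} [AddCommGroup G] (F H : G → ℝ≥0∞)

theorem discreteConv_comm : discreteConv F H = discreteConv H F := by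
  funext j
  rw [discreteConv, ← (Equiv.subLeft j).tsum_eq]
  simp [discreteConv, mul_comm]

theorem tsum_discreteConv : ∑' j, discreteConv F H j = (∑' j, F j) * ∑' k, H k := by
  calc ∑' j, ∑' k, F (j - k) * H k = ∑' k, (∑' j, F (j - k)) * H k := by
        rw [ENNReal.tsum_comm]
        simp only [ENNReal.tsum_mul_right]
    _ = (∑' j, F j) * ∑' k, H k := by
        rw [← ENNReal.tsum_mul_left]
        exact tsum_congr fun k => congrArg (· * H k) ((Equiv.subRight k).tsum_eq F)

theorem discreteConv_le_iSup_mul_tsum (j : G) :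
    discreteConv F H j ≤ (⨆ i, F i) * ∑' k, H k := by
  rw [discreteConv, ← ENNReal.tsum_mul_left]
  gcongr with k
  exact le_iSup F (j - k)

theorem discreteConv_rpow_le_rpow_discreteConv {M : ℝ} (hM : 1 ≤ M) (j : G) :
    discreteConv (fun i => F i ^ M) (fun i => H i ^ M) j ≤ discreteConv F H j ^ M := by
  simp only [discreteConv, ← ENNReal.mul_rpow_of_nonneg _ _ (zero_le_one.trans hM)]
  exact ENNReal.tsum_rpow_le_rpow_tsum _ hM

theorem discreteConv_rpow_add_le {p q r : ℝ} (hp : 0 ≤ p) (hq : 0 ≤ q) (hr : 0 ≤ r)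
    (hpqr : p + q + r = 1) (j : G) :
    discreteConv (fun i => F i ^ (p + q)) (fun i => H i ^ (p + r)) j ≤
      discreteConv F H j ^ p * (∑' i, F i) ^ q * (∑' i, H i) ^ r := by
  calc discreteConv (fun i => F i ^ (p + q)) (fun i => H i ^ (p + r)) j
      = ∑' k, (F (j - k) * H k) ^ p * F (j - k) ^ q * H k ^ r := by
        refine tsum_congr fun k => ?_
        dsimp only
        rw [ENNReal.rpow_add_of_nonneg _ _ hp hq, ENNReal.rpow_add_of_nonneg _ _ hp hr,
          ENNReal.mul_rpow_of_nonneg _ _ hp]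
        ring
    _ ≤ _ := ENNReal.tsum_mul_mul_rpow_le _ _ _ hp hq hr hpqr
    _ = _ := by rw [show ∑' k, F (j - k) = ∑' i, F i from (Equiv.subLeft j).tsum_eq F]; rfl

theorem discreteConv_rpow_le {u₁ u₂ M : ℝ} (hM : 1 ≤ M) (h₁ : u₁ ≤ M) (h₂ : u₂ ≤ M)
    (h : M ≤ u₁ + u₂) (j : G) :
    discreteConv (fun i => F i ^ u₁) (fun i => H i ^ u₂) j ≤
      (∑' i, F i) ^ (M - u₂) * (∑' i, H i) ^ (M - u₁) * discreteConv F H j ^ (u₁ + u₂ - M) := by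
  have hM0 : 0 < M := zero_lt_one.trans_le hM
  have hpow (f : G → ℝ≥0∞) (u : ℝ) : (fun i => f i ^ u) = fun i => (f i ^ (u / M)) ^ M := by
    simp only [← ENNReal.rpow_mul, div_mul_cancel₀ u hM0.ne']
  have holder := discreteConv_rpow_add_le F H (p := (u₁ + u₂ - M) / M) (q := (M - u₂) / M)
    (r := (M - u₁) / M) (by bound) (by bound) (by bound) (by field_simp; ring) j
  rw [show (u₁ + u₂ - M) / M + (M - u₂) / M = u₁ / M by field_simp; ring,
    show (u₁ + u₂ - M) / M + (M - u₁) / M = u₂ / M by field_simp; ring] at holder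
  calc discreteConv (fun i => F i ^ u₁) (fun i => H i ^ u₂) j
      ≤ discreteConv (fun i => F i ^ (u₁ / M)) (fun i => H i ^ (u₂ / M)) j ^ M := by
        rw [hpow F, hpow H]
        exact discreteConv_rpow_le_rpow_discreteConv _ _ hM j
    _ ≤ (discreteConv F H j ^ ((u₁ + u₂ - M) / M) * (∑' i, F i) ^ ((M - u₂) / M) *
          (∑' i, H i) ^ ((M - u₁) / M)) ^ M := by gcongr
    _ = _ := by
        simp only [ENNReal.mul_rpow_of_nonneg _ _ hM0.le, ← ENNReal.rpow_mul,
          div_mul_cancel₀ _ hM0.ne']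
        ring

end Convolution

section CountingMeasure

variable {α : Type*} [MeasurableSpace α] [MeasurableSingletonClass α]

theorem eLpNorm_count_eq_tsum (f : α → ℝ≥0∞) {p : ℝ≥0∞} (hp0 : p ≠ 0) (hp : p ≠ ∞) :
    eLpNorm f p .count = (∑' j, f j ^ p.toReal) ^ (1 / p.toReal) := by
  simp [eLpNorm_eq_lintegral_rpow_enorm_toReal hp0 hp, lintegral_count]

theorem eLpNorm_count_top (f : α → ℝ≥0∞) : eLpNorm f ∞ .count = ⨆ j, f j := by
  simp

theorem eLpNorm_count_rpow_le (c : α → ℝ≥0∞) {p : ℝ≥0∞} {s : ℝ} (hs : (1 / p).toReal ≤ s) :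
    eLpNorm (fun j => c j ^ s) p .count ≤ (∑' j, c j) ^ s := by
  rcases eq_or_ne p 0 with rfl | hp0
  · simp
  rcases eq_or_ne p ∞ with rfl | hp
  · rw [eLpNorm_count_top]
    simp only [ENNReal.div_top, ENNReal.toReal_zero] at hs
    exact iSup_le fun j => ENNReal.rpow_le_rpow (ENNReal.le_tsum j) hs
  have hp' : 0 < p.toReal := ENNReal.toReal_pos hp0 hp
  have hsp : 1 ≤ s * p.toReal := by
    rw [one_div, ENNReal.toReal_inv, inv_le_iff_one_le_mul₀' hp'] at hs
    linarith
  rw [eLpNorm_count_eq_tsum _ hp0 hp]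
  calc (∑' j, (c j ^ s) ^ p.toReal) ^ (1 / p.toReal)
      = (∑' j, c j ^ (s * p.toReal)) ^ (1 / p.toReal) := by simp only [ENNReal.rpow_mul]
    _ ≤ ((∑' j, c j) ^ (s * p.toReal)) ^ (1 / p.toReal) := by
      gcongr
      exact ENNReal.tsum_rpow_le_rpow_tsum c hsp
    _ = (∑' j, c j) ^ s := by
      rw [← ENNReal.rpow_mul, mul_assoc, mul_one_div_cancel hp'.ne', mul_one]

theorem tsum_le_eLpNorm_count (f : α → ℝ≥0∞) {p : ℝ≥0∞} (hp0 : p ≠ 0) (hp1 : p ≤ 1) :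
    ∑' j, f j ≤ eLpNorm f p .count := by
  have hp : p ≠ ∞ := (hp1.trans_lt ENNReal.one_lt_top).ne
  have hp' : 0 < p.toReal := ENNReal.toReal_pos hp0 hp
  have hp1' : 1 ≤ 1 / p.toReal := by
    rw [le_div_iff₀ hp', one_mul]
    exact ENNReal.toReal_le_of_le_ofReal zero_le_one (by simpa using hp1)
  rw [eLpNorm_count_eq_tsum _ hp0 hp]
  calc ∑' j, f j = ∑' j, (f j ^ p.toReal) ^ (1 / p.toReal) := by
        simp only [← ENNReal.rpow_mul, mul_one_div_cancel hp'.ne', ENNReal.rpow_one]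
    _ ≤ _ := ENNReal.tsum_rpow_le_rpow_tsum _ hp1'

end CountingMeasure

section Young

variable {G : Type*} [AddCommGroup G] [MeasurableSpace G] [DiscreteMeasurableSpace G]
  (F H : G → ℝ≥0∞) {p₀ p₁ p₂ : ℝ≥0∞}

theorem eLpNorm_discreteConv_le_of_ne_top (hp₁ : p₁ ≠ 0) (hp₁' : p₁ ≠ ∞) (hp₂ : p₂ ≠ 0)
    (hp₂' : p₂ ≠ ∞)
    (hp : (1 / p₀).toReal ≤ (1 / p₁).toReal + (1 / p₂).toReal
      - max 1 (max (1 / p₁).toReal (1 / p₂).toReal)) :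
    eLpNorm (discreteConv F H) p₀ .count ≤ eLpNorm F p₁ .count * eLpNorm H p₂ .count := by
  set u₁ := (1 / p₁).toReal
  set u₂ := (1 / p₂).toReal
  set M := max 1 (max u₁ u₂)
  have hu₁ : u₁ = 1 / p₁.toReal := by simp [u₁]
  have hu₂ : u₂ = 1 / p₂.toReal := by simp [u₂]
  have hM₁ : u₁ ≤ M := (le_max_left _ _).trans (le_max_right _ _)
  have hM₂ : u₂ ≤ M := (le_max_right _ _).trans (le_max_right _ _)
  have hs : 0 ≤ u₁ + u₂ - M := ENNReal.toReal_nonneg.trans hp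
  set a := fun i => F i ^ p₁.toReal
  set b := fun i => H i ^ p₂.toReal
  have hF : F = fun i => a i ^ u₁ := by
    simp only [a, hu₁, ← ENNReal.rpow_mul,
      mul_one_div_cancel (ENNReal.toReal_ne_zero.2 ⟨hp₁, hp₁'⟩), ENNReal.rpow_one]
  have hH : H = fun i => b i ^ u₂ := by
    simp only [b, hu₂, ← ENNReal.rpow_mul,
      mul_one_div_cancel (ENNReal.toReal_ne_zero.2 ⟨hp₂, hp₂'⟩), ENNReal.rpow_one]
  set K := (∑' i, a i) ^ (M - u₂) * (∑' i, b i) ^ (M - u₁)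
  have hpoint (j : G) : discreteConv F H j ≤ K * discreteConv a b j ^ (u₁ + u₂ - M) := by
    rw [hF, hH]
    exact discreteConv_rpow_le a b (le_max_left _ _) hM₁ hM₂ (by linarith) j
  calc eLpNorm (discreteConv F H) p₀ .count
      ≤ K * eLpNorm (fun j => discreteConv a b j ^ (u₁ + u₂ - M)) p₀ .count :=
        eLpNorm_le_mul_eLpNorm_of_ae_le_mul'' _ Measurable.of_discrete.aestronglyMeasurable
          (.of_forall fun j => by simpa using hpoint j)
    _ ≤ K * ((∑' i, a i) * ∑' i, b i) ^ (u₁ + u₂ - M) := by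
        rw [← tsum_discreteConv]
        gcongr
        exact eLpNorm_count_rpow_le _ hp
    _ = (∑' i, a i) ^ u₁ * (∑' i, b i) ^ u₂ := by
        rw [ENNReal.mul_rpow_of_nonneg _ _ hs, mul_mul_mul_comm,
          ← ENNReal.rpow_add_of_nonneg _ _ (sub_nonneg.2 hM₂) hs,
          ← ENNReal.rpow_add_of_nonneg _ _ (sub_nonneg.2 hM₁) hs]
        congr 2 <;> ring
    _ = eLpNorm F p₁ .count * eLpNorm H p₂ .count := by
        rw [eLpNorm_count_eq_tsum _ hp₁ hp₁', eLpNorm_count_eq_tsum _ hp₂ hp₂', ← hu₁, ← hu₂]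

theorem eLpNorm_discreteConv_le_of_left_top
    (hp : (1 / p₀).toReal ≤ (1 / ∞).toReal + (1 / p₂).toReal
      - max 1 (max (1 / ∞).toReal (1 / p₂).toReal)) :
    eLpNorm (discreteConv F H) p₀ .count ≤ eLpNorm F ∞ .count * eLpNorm H p₂ .count := by
  simp only [one_div, ENNReal.inv_top, ENNReal.toReal_zero, zero_add] at hp
  have hmax := le_max_left 1 (max 0 (p₂⁻¹).toReal)
  have hmax' := (le_max_right 0 (p₂⁻¹).toReal).trans (le_max_right 1 (max 0 (p₂⁻¹).toReal))
  have hp₀ : (p₀⁻¹).toReal = 0 := le_antisymm (by linarith) ENNReal.toReal_nonneg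
  have hp₂ : 1 ≤ (p₂⁻¹).toReal := by linarith [ENNReal.toReal_nonneg (a := p₀⁻¹)]
  have hp₂0 : p₂ ≠ 0 := by
    rintro rfl
    norm_num at hp₂
  have hp₂1 : p₂ ≤ 1 := by
    refine ENNReal.one_le_inv.1 ?_
    calc (1 : ℝ≥0∞) = ENNReal.ofReal 1 := ENNReal.ofReal_one.symm
      _ ≤ ENNReal.ofReal (p₂⁻¹).toReal := ENNReal.ofReal_le_ofReal hp₂
      _ ≤ p₂⁻¹ := ENNReal.ofReal_toReal_le
  rcases (ENNReal.toReal_eq_zero_iff _).1 hp₀ with h | h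
  · rw [ENNReal.inv_eq_zero.1 h, eLpNorm_count_top, eLpNorm_count_top]
    exact iSup_le fun j => (discreteConv_le_iSup_mul_tsum F H j).trans
      (by gcongr; exact tsum_le_eLpNorm_count H hp₂0 hp₂1)
  · simp [ENNReal.inv_eq_top.1 h]

theorem eLpNorm_discreteConv_le (hp₁ : p₁ ≠ 0) (hp₂ : p₂ ≠ 0)
    (hp : (1 / p₀).toReal ≤ (1 / p₁).toReal + (1 / p₂).toReal
      - max 1 (max (1 / p₁).toReal (1 / p₂).toReal)) :
    eLpNorm (discreteConv F H) p₀ .count ≤ eLpNorm F p₁ .count * eLpNorm H p₂ .count := by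
  rcases eq_or_ne p₁ ∞ with rfl | hp₁'
  · exact eLpNorm_discreteConv_le_of_left_top F H hp
  rcases eq_or_ne p₂ ∞ with rfl | hp₂'
  · rw [discreteConv_comm, mul_comm]
    rw [add_comm, max_comm (1 / p₁).toReal] at hp
    exact eLpNorm_discreteConv_le_of_left_top H F hp
  exact eLpNorm_discreteConv_le_of_ne_top F H hp₁ hp₁' hp₂ hp₂' hp

end Young

theorem enorm_weighted_tsum_le_discreteConv {G 𝕜 : Type*} [AddCommGroup G] [RCLike 𝕜]
    {ω₀ ω₁ ω₂ : G → ℝ} (hω₀ : ∀ j, 0 ≤ ω₀ j) (hω : ∀ j₁ j₂, ω₀ (j₁ + j₂) ≤ ω₁ j₁ * ω₂ j₂)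
    (a₁ a₂ : G → 𝕜) (j : G) :
    ‖(ω₀ j : 𝕜) * ∑' k, a₁ (j - k) * a₂ k‖ₑ ≤
      discreteConv (fun i => ‖(ω₁ i : 𝕜) * a₁ i‖ₑ) (fun i => ‖(ω₂ i : 𝕜) * a₂ i‖ₑ) j := by
  have hweight (k : G) : ‖(ω₀ j : 𝕜)‖ₑ ≤ ‖(ω₁ (j - k) : 𝕜)‖ₑ * ‖(ω₂ k : 𝕜)‖ₑ := by
    rw [← enorm_mul, ← RCLike.ofReal_mul, enorm_le_iff_norm_le, RCLike.norm_ofReal,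
      RCLike.norm_ofReal, abs_of_nonneg (hω₀ j)]
    simpa using (hω (j - k) k).trans (le_abs_self _)
  calc ‖(ω₀ j : 𝕜) * ∑' k, a₁ (j - k) * a₂ k‖ₑ
      ≤ ‖(ω₀ j : 𝕜)‖ₑ * ∑' k, ‖a₁ (j - k)‖ₑ * ‖a₂ k‖ₑ := by
        rw [enorm_mul]
        gcongr
        simpa only [enorm_mul] using enorm_tsum_le_tsum_enorm (f := fun k => a₁ (j - k) * a₂ k)
    _ ≤ ∑' k, ‖(ω₁ (j - k) : 𝕜)‖ₑ * ‖(ω₂ k : 𝕜)‖ₑ * (‖a₁ (j - k)‖ₑ * ‖a₂ k‖ₑ) := by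
        rw [← ENNReal.tsum_mul_left]
        gcongr with k
        exact hweight k
    _ = _ := by
        simp only [discreteConv, enorm_mul]
        exact tsum_congr fun k => by ring

theorem stmt7_general {d : ℕ} (b : Module.Basis (Fin d) ℝ (EuclideanSpace ℝ (Fin d)))
    (ω₀ ω₁ ω₂ : AddSubgroup.closure (Set.range ⇑b) → ℝ)
    (hω : ∀ j, 0 < ω₀ j ∧ 0 < ω₁ j ∧ 0 < ω₂ j)
    (hω₀ : ∀ j₁ j₂, ω₀ (j₁ + j₂) ≤ ω₁ j₁ * ω₂ j₂)
    (p₀ p₁ p₂ : ℝ≥0∞) (hp₁ : 0 < p₁) (hp₂ : 0 < p₂)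
    (hp : (1 / p₀).toReal ≤ (1 / p₁).toReal + (1 / p₂).toReal
      - max 1 (max (1 / p₁).toReal (1 / p₂).toReal))
    (a₁ a₂ : AddSubgroup.closure (Set.range ⇑b) → ℂ) :
    lqNorm (fun j => (ω₀ j : ℂ) * ∑' k, a₁ (j - k) * a₂ k) p₀ ≤
      lqNorm (fun j => (ω₁ j : ℂ) * a₁ j) p₁ * lqNorm (fun j => (ω₂ j : ℂ) * a₂ j) p₂ := by
  let _ : MeasurableSpace (AddSubgroup.closure (Set.range ⇑b)) := ⊤
  calc lqNorm (fun j => (ω₀ j : ℂ) * ∑' k, a₁ (j - k) * a₂ k) p₀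
      ≤ eLpNorm (discreteConv (fun i => ‖(ω₁ i : ℂ) * a₁ i‖ₑ)
          (fun i => ‖(ω₂ i : ℂ) * a₂ i‖ₑ)) p₀ .count :=
        eLpNorm_mono_enorm fun j => by
          simpa using enorm_weighted_tsum_le_discreteConv (fun j => (hω j).1.le) hω₀ a₁ a₂ j
    _ ≤ _ := eLpNorm_discreteConv_le _ _ hp₁.ne' hp₂.ne' hp
    _ = _ := by rw [eLpNorm_enorm, eLpNorm_enorm]; rfl

theorem stmt7 {d : ℕ} (b : Module.Basis (Fin d) ℝ (EuclideanSpace ℝ (Fin d)))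
    (ω₀ ω₁ ω₂ : AddSubgroup.closure (Set.range ⇑b) → ℝ)
    (hω : ∀ j, 0 < ω₀ j ∧ 0 < ω₁ j ∧ 0 < ω₂ j)
    (hω₀ : ∀ j₁ j₂, ω₀ (j₁ + j₂) ≤ ω₁ j₁ * ω₂ j₂)
    (p₀ p₁ p₂ : ℝ≥0∞) (hp₀ : 0 < p₀) (hp₁ : 0 < p₁) (hp₂ : 0 < p₂)
    (hp : (1 / p₀).toReal ≤ (1 / p₁).toReal + (1 / p₂).toReal
      - max 1 (max (1 / p₁).toReal (1 / p₂).toReal))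
    (a₁ a₂ : AddSubgroup.closure (Set.range ⇑b) → ℂ)
    (ha₁ : (Function.support a₁).Finite) (ha₂ : (Function.support a₂).Finite) :
    lqNorm (fun j => (ω₀ j : ℂ) * ∑' k, a₁ (j - k) * a₂ k) p₀ ≤
      lqNorm (fun j => (ω₁ j : ℂ) * a₁ j) p₁ * lqNorm (fun j => (ω₂ j : ℂ) * a₂ j) p₂ :=
  stmt7_general b ω₀ ω₁ ω₂ hω hω₀ p₀ p₁ p₂ hp₁ hp₂ hp a₁ a₂
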